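/- arXiv:1004.4200 — 4 statements merged into one kernel-verified Lean document; each statement's English description precedes it below -/
import Mathlib

section
/- Let a ≤ 0 ≤ b with b − a ≥ 1 and −ab ≤ 1. For an irrational x, define digits by n₀ = ⌊x⌉_{a,b}, x₁ = −1/(x−n₀), and n_{i} = ⌊x_i⌉_{a,b}, x_{i+1} = −1/(x_i−n_i). Then no pair of consecutive digits (n_i, n_{i+1}) can be of the form (p, 1) with p ≥ 1, nor of the form (−p, −1) with p ≥ 1. -/
/-- The generalized integer part `⌊x⌉_{a,b}`. -/
noncomputable def gfloor (a b x : ℝ) : ℤ :=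
  if x < a then ⌊x - a⌋ else if x < b then 0 else ⌊x - b⌋ + 1

/-- The sequence `x₀ = x`, `x_{i+1} = -1/(x_i - ⌊x_i⌉_{a,b})`. -/
noncomputable def xseq (a b x : ℝ) : ℕ → ℝ
  | 0 => x
  | i + 1 => -1 / (xseq a b x i - (gfloor a b (xseq a b x i) : ℝ))

/-- The digits `n_i = ⌊x_i⌉_{a,b}` of the (a,b)-continued fraction of `x`. -/
noncomputable def dig (a b x : ℝ) (i : ℕ) : ℤ := gfloor a b (xseq a b x i)

/-!
Write `y = x_i`, `n = ⌊y⌉_{a,b}` and `t = y - n`, so that `x_{i+1} = -1/t` with `t ≠ 0` by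
irrationality. If `n ≥ 1` then `t ∈ [b - 1, b)`: for `t > 0` the next point `-1/t` is negative,
hence has digit `≤ 0`, while for `t < 0` it is at least `1/(1 - b) ≥ b + 1`, hence has digit
`≥ 2`. Symmetrically, if `n ≤ -1` then `t ∈ [a, a + 1)`, and `-1/t` is either positive (digit
`≥ 0`) or below `a - 1` (digit `≤ -2`).
-/

open Set

section GFloor

variable {a b x : ℝ}

lemma gfloor_of_lt (h : x < a) : gfloor a b x = ⌊x - a⌋ := if_pos h

lemma gfloor_of_mem_Ico (h : x ∈ Ico a b) : gfloor a b x = 0 := by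
  simp only [gfloor, if_neg h.1.not_gt, if_pos h.2]

lemma gfloor_of_le_of_le (hax : a ≤ x) (hbx : b ≤ x) : gfloor a b x = ⌊x - b⌋ + 1 := by
  simp only [gfloor, if_neg hax.not_gt, if_neg hbx.not_gt]

lemma gfloor_nonneg (h : a ≤ x) : 0 ≤ gfloor a b x := by
  rcases lt_or_ge x b with hxb | hbx
  · rw [gfloor_of_mem_Ico ⟨h, hxb⟩]
  · have : 0 ≤ ⌊x - b⌋ := Int.floor_nonneg.2 (sub_nonneg.2 hbx)
    rw [gfloor_of_le_of_le h hbx]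
    omega

lemma gfloor_nonpos (h : x < b) : gfloor a b x ≤ 0 := by
  rcases lt_or_ge x a with hxa | hax
  · rw [gfloor_of_lt hxa]
    exact Int.floor_nonpos (sub_neg.2 hxa).le
  · rw [gfloor_of_mem_Ico ⟨hax, h⟩]

lemma two_le_gfloor (hab : a ≤ b) (h : b + 1 ≤ x) : 2 ≤ gfloor a b x := by
  have : 1 ≤ ⌊x - b⌋ := Int.le_floor.2 (by push_cast; linarith)
  rw [gfloor_of_le_of_le (by linarith) (by linarith)]
  omega

lemma gfloor_le_neg_two (h : x < a - 1) : gfloor a b x ≤ -2 := by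
  rw [gfloor_of_lt (by linarith), Int.le_iff_lt_add_one, Int.floor_lt]
  push_cast
  linarith

lemma sub_gfloor_mem_Ico_of_one_le (h : 1 ≤ gfloor a b x) :
    x - gfloor a b x ∈ Ico (b - 1) b := by
  rcases lt_or_ge x a with hxa | hax
  · rw [gfloor_of_lt hxa, Int.le_floor] at h
    push_cast at h
    linarith
  rcases lt_or_ge x b with hxb | hbx
  · rw [gfloor_of_mem_Ico ⟨hax, hxb⟩] at h
    omega
  · rw [gfloor_of_le_of_le hax hbx]
    push_cast
    constructor <;> linarith [Int.floor_le (x - b), Int.lt_floor_add_one (x - b)]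

lemma sub_gfloor_mem_Ico_of_le_neg_one (h : gfloor a b x ≤ -1) :
    x - gfloor a b x ∈ Ico a (a + 1) := by
  rcases lt_or_ge x a with hxa | hax
  · rw [gfloor_of_lt hxa]
    constructor <;> linarith [Int.floor_le (x - a), Int.lt_floor_add_one (x - a)]
  · linarith [gfloor_nonneg (b := b) hax, (by exact_mod_cast h : (gfloor a b x : ℝ) ≤ -1)]

end GFloor

section NegInv

variable {a b t : ℝ}

lemma add_one_le_neg_one_div (hb : 0 ≤ b) (hbt : b - 1 ≤ t) (ht : t < 0) : b + 1 ≤ -1 / t := by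
  rw [le_div_iff_of_neg ht]
  nlinarith

lemma neg_one_div_lt_sub_one (ha : a ≤ 0) (ht : 0 < t) (hta : t < a + 1) : -1 / t < a - 1 := by
  rw [div_lt_iff₀ ht]
  nlinarith

lemma gfloor_neg_one_div_ne_one (hab : a ≤ b) (hb : 0 ≤ b) (ht0 : t ≠ 0)
    (ht : t ∈ Ico (b - 1) b) : gfloor a b (-1 / t) ≠ 1 := by
  rcases ht0.lt_or_gt with hneg | hpos
  · have := two_le_gfloor hab (add_one_le_neg_one_div hb ht.1 hneg)
    omega
  · have := gfloor_nonpos (a := a) ((div_neg_of_neg_of_pos neg_one_lt_zero hpos).trans_le hb)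
    omega

lemma gfloor_neg_one_div_ne_neg_one (ha : a ≤ 0) (ht0 : t ≠ 0)
    (ht : t ∈ Ico a (a + 1)) : gfloor a b (-1 / t) ≠ -1 := by
  rcases ht0.lt_or_gt with hneg | hpos
  · have := gfloor_nonneg (b := b) (ha.trans (div_pos_of_neg_of_neg neg_one_lt_zero hneg).le)
    omega
  · have := gfloor_le_neg_two (b := b) (neg_one_div_lt_sub_one ha hpos ht.2)
    omega

end NegInv

lemma irrational_xseq (a b : ℝ) {x : ℝ} (hx : Irrational x) : ∀ i, Irrational (xseq a b x i)
  | 0 => hx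
  | i + 1 => by
    simpa only [xseq, neg_div, one_div] using
      ((irrational_xseq a b hx i).sub_intCast (gfloor a b (xseq a b x i))).inv.neg

lemma dig_succ (a b x : ℝ) (i : ℕ) :
    dig a b x (i + 1) = gfloor a b (-1 / (xseq a b x i - dig a b x i)) := rfl

theorem no_forbidden_pairs_general (a b x : ℝ) (ha : a ≤ 0) (hb : 0 ≤ b)
    (hx : Irrational x) (i : ℕ) :
    ¬(1 ≤ dig a b x i ∧ dig a b x (i + 1) = 1) ∧
      ¬(dig a b x i ≤ -1 ∧ dig a b x (i + 1) = -1) := by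
  have ht0 : xseq a b x i - dig a b x i ≠ 0 :=
    ((irrational_xseq a b hx i).sub_intCast _).ne_zero
  rw [dig_succ]
  exact ⟨fun ⟨hpos, hone⟩ =>
      gfloor_neg_one_div_ne_one (ha.trans hb) hb ht0 (sub_gfloor_mem_Ico_of_one_le hpos) hone,
    fun ⟨hneg, hone⟩ =>
      gfloor_neg_one_div_ne_neg_one ha ht0 (sub_gfloor_mem_Ico_of_le_neg_one hneg) hone⟩

theorem no_forbidden_pairs (a b x : ℝ) (ha : a ≤ 0) (hb : 0 ≤ b)
    (hab : 1 ≤ b - a) (hprod : -(a * b) ≤ 1) (hx : Irrational x) (i : ℕ) :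
    ¬(1 ≤ dig a b x i ∧ dig a b x (i + 1) = 1) ∧
      ¬(dig a b x i ≤ -1 ∧ dig a b x (i + 1) = -1) :=
  no_forbidden_pairs_general a b x ha hb hx i
end

section
/- Let b ∈ (0,1) and m ≥ 1 an integer with TᵐS(b) = m − 1/b = 0, i.e. b = 1/m. Then the value 0 is reached by both sides of the b-cycle: on the lower side, S(b) = −m, T^{m−1}(−m) = −1, T(−1) = 0; on the upper side, T^{−1}(b) = b−1, S(b−1) = −1/(b−1) = m/(m−1) when m ≥ 2, and after applying T^{−1}(ST^{−2})^{m−2} one reaches 1, then T^{−1}(1) = 0. Moreover the product of the transformations over this cycle is not the identity in PSL(2,ℤ) (weak cycle). -/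
/-!
On the upper side, `S T⁻²` sends `(x + 2)/(x + 1)` to `(x + 1)/x`, so starting from
`m/(m - 1) = (k + 2)/(k + 1)` with `k = m - 2` the `k` steps telescope down to `2`.

For the cycle product, `S T⁻²` is minus a parabolic element, whence
`(S T⁻²)ᵏ = (-1)ᵏ [[1 - k, k], [-k, 1 + k]]`, and multiplying out gives
`(-1)ᵏ [[-(k + 2), 1], [-(k² + 3k + 3), k + 1]]`, whose upper-right entry `±1` rules out `±I`.
-/

open ModularGroup

/-- The Möbius transformation `S T⁻² : x ↦ -1/(x-2)`. -/
noncomputable def gStep (x : ℝ) : ℝ := -1 / (x - 2)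

open MatrixGroups Matrix.SpecialLinearGroup

lemma gStep_add_two_div_add_one {x : ℝ} (hx : 0 < x) :
    gStep ((x + 2) / (x + 1)) = (x + 1) / x := by
  have h : (x + 2) / (x + 1) - 2 = -(x / (x + 1)) := by field_simp; ring
  rw [gStep, h, div_neg, neg_div, neg_neg, one_div_div]

lemma gStep_iterate_eq_two (k : ℕ) : gStep^[k] ((k + 2) / (k + 1)) = 2 := by
  induction k with
  | zero => norm_num
  | succ k ih =>
    rw [Function.iterate_succ_apply, Nat.cast_succ, gStep_add_two_div_add_one (by positivity),
      add_assoc, one_add_one_eq_two, ih]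

namespace ModularGroup

lemma coe_T_pow (n : ℕ) :
    ((T ^ n : SL(2, ℤ)) : Matrix (Fin 2) (Fin 2) ℤ) = !![1, (n : ℤ); 0, 1] := by
  rw [← zpow_natCast, coe_T_zpow]

lemma coe_S_mul_T_inv_mul_T_inv_pow (k : ℕ) :
    (((S * T⁻¹ * T⁻¹) ^ k : SL(2, ℤ)) : Matrix (Fin 2) (Fin 2) ℤ)
      = (-1 : ℤ) ^ k • !![1 - (k : ℤ), k; -k, 1 + k] := by
  induction k with
  | zero => simp [Matrix.one_fin_two]
  | succ k ih =>
    rw [pow_succ, coe_mul, ih, coe_mul, coe_mul, coe_S, coe_T_inv]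
    ext i j
    fin_cases i <;> fin_cases j <;> simp [Matrix.mul_apply, Fin.sum_univ_two] <;> ring

end ModularGroup

def weakCycleProduct (m : ℕ) : SL(2, ℤ) :=
  T * (T⁻¹ * (S * T⁻¹ * T⁻¹) ^ (m - 2) * S)⁻¹ * (T ^ m * S)

lemma coe_weakCycleProduct_add_two (k : ℕ) :
    (weakCycleProduct (k + 2) : Matrix (Fin 2) (Fin 2) ℤ)
      = (-1 : ℤ) ^ k • !![-((k : ℤ) + 2), 1; -((k : ℤ) ^ 2 + 3 * k + 3), (k : ℤ) + 1] := by
  rw [weakCycleProduct, Nat.add_sub_cancel, coe_mul, coe_mul, coe_inv, coe_mul, coe_mul,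
    coe_S_mul_T_inv_mul_T_inv_pow, coe_mul, coe_T_pow, coe_S, coe_T, coe_T_inv]
  ext i j
  fin_cases i <;> fin_cases j <;>
    simp [Matrix.mul_apply, Fin.sum_univ_two, Matrix.adjugate_fin_two] <;> ring

lemma weakCycleProduct_add_two_apply_zero_one_ne_zero (k : ℕ) :
    (weakCycleProduct (k + 2) : Matrix (Fin 2) (Fin 2) ℤ) 0 1 ≠ 0 := by
  simp [coe_weakCycleProduct_add_two]

theorem weak_cycle_b_eq_one_div_m (m : ℕ) (hm : 2 ≤ m) (b : ℝ)
    (hb : b = 1 / (m : ℝ)) :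
    -- lower side: S(b) = -m, then T^{m-1} gives -1, then T gives 0
    (-1 / b = -(m : ℝ)) ∧
    (-(m : ℝ) + ((m : ℝ) - 1) = -1) ∧
    ((-1 : ℝ) + 1 = 0) ∧
    -- upper side: S(b-1) = m/(m-1), then T⁻¹(ST⁻²)^{m-2} reaches 1, then T⁻¹ gives 0
    (-1 / (b - 1) = (m : ℝ) / ((m : ℝ) - 1)) ∧
    (gStep^[m - 2] ((m : ℝ) / ((m : ℝ) - 1)) - 1 = 1) ∧
    ((1 : ℝ) - 1 = 0) ∧
    -- the product over the cycle is not the identity in PSL(2,ℤ) (weak cycle)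
    (((T * (T⁻¹ * (S * T⁻¹ * T⁻¹) ^ (m - 2) * S)⁻¹ * (T ^ m * S) :
        Matrix.SpecialLinearGroup (Fin 2) ℤ) : Matrix (Fin 2) (Fin 2) ℤ) ≠ 1 ∧
      ((T * (T⁻¹ * (S * T⁻¹ * T⁻¹) ^ (m - 2) * S)⁻¹ * (T ^ m * S) :
        Matrix.SpecialLinearGroup (Fin 2) ℤ) : Matrix (Fin 2) (Fin 2) ℤ) ≠ -1) := by
  obtain ⟨k, rfl⟩ := Nat.exists_eq_add_of_le' hm
  subst hb
  have h01 := weakCycleProduct_add_two_apply_zero_one_ne_zero k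
  have hm_sub_one : ((k + 2 : ℕ) : ℝ) - 1 = k + 1 := by push_cast; ring
  refine ⟨by field_simp, by ring, by norm_num, ?_, ?_, by norm_num,
    fun h => h01 (by rw [weakCycleProduct, h]; rfl),
    fun h => h01 (by rw [weakCycleProduct, h]; rfl)⟩
  · have hb_sub_one : 1 / ((k + 2 : ℕ) : ℝ) - 1 = -((k + 1) / (k + 2)) := by
      push_cast; field_simp; ring
    rw [hb_sub_one, div_neg, neg_div, neg_neg, one_div_div, hm_sub_one]
    push_cast; ring
  · rw [hm_sub_one, Nat.add_sub_cancel]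
    push_cast
    rw [gStep_iterate_eq_two]
    norm_num
end

section
/- Let a, b satisfy 1 ≤ −1/a ≤ b+1 and a−1 ≤ −1/b ≤ −1 (in particular a < 0 < b). Define the region D̂ = [a, 1−1/b]×[−1,0] ∪ [1−1/b, a+1]×[−1/2,0] ∪ [b−1, −1/a−1]×[0,1/2] ∪ [−1/a−1, b]×[0,1]. Then ∫∫_{D̂} dx dy/(1+xy)² = log[(1+b)(1−a)]. -/
/-!
Since `∂ₓ ∂ᵧ log (1 + x y) = (1 + x y)⁻²`, the integral of the density over a rectangle on which
`1 + x y` does not vanish is the alternating sum of `log (1 + x y)` over its corners. The four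
rectangles of `D̂` all have one horizontal side on `y = 0`, where `log (1 + x y) = 0`, and the
remaining eight corner terms collapse to `log ((1 + b) (1 - a))`.
-/

open Real intervalIntegral Set MeasureTheory
open scoped Interval

lemma hasDerivAt_div_one_add_mul {x y : ℝ} (h : 1 + x * y ≠ 0) :
    HasDerivAt (fun y => y / (1 + x * y)) ((1 + x * y) ^ 2)⁻¹ y := by
  have hden : HasDerivAt (fun y => 1 + x * y) x y := by
    simpa using ((hasDerivAt_id y).const_mul x).const_add 1
  refine ((hasDerivAt_id' y).div hden h).congr_deriv ?_
  field_simp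
  ring

lemma hasDerivAt_log_one_add_mul {x y : ℝ} (h : 1 + x * y ≠ 0) :
    HasDerivAt (fun x => log (1 + x * y)) (y / (1 + x * y)) x := by
  have harg : HasDerivAt (fun x => 1 + x * y) y x := by
    simpa using ((hasDerivAt_id x).mul_const y).const_add 1
  exact harg.log h

lemma integral_inv_one_add_mul_sq {x c d : ℝ} (h : ∀ y ∈ [[c, d]], 1 + x * y ≠ 0) :
    ∫ y in c..d, ((1 + x * y) ^ 2)⁻¹ = d / (1 + x * d) - c / (1 + x * c) := by
  refine integral_eq_sub_of_hasDerivAt (fun y hy => hasDerivAt_div_one_add_mul (h y hy)) ?_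
  refine ContinuousOn.intervalIntegrable (ContinuousOn.inv₀ (by fun_prop) fun y hy => ?_)
  exact pow_ne_zero 2 (h y hy)

lemma intervalIntegrable_div_one_add_mul {y p q : ℝ} (h : ∀ x ∈ [[p, q]], 1 + x * y ≠ 0) :
    IntervalIntegrable (fun x => y / (1 + x * y)) volume p q :=
  (ContinuousOn.div (by fun_prop) (by fun_prop) h).intervalIntegrable

lemma integral_div_one_add_mul {y p q : ℝ} (h : ∀ x ∈ [[p, q]], 1 + x * y ≠ 0) :
    ∫ x in p..q, y / (1 + x * y) = log (1 + q * y) - log (1 + p * y) :=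
  integral_eq_sub_of_hasDerivAt (fun x hx => hasDerivAt_log_one_add_mul (h x hx))
    (intervalIntegrable_div_one_add_mul h)

theorem integral_integral_inv_one_add_mul_sq {p q c d : ℝ}
    (h : ∀ x ∈ [[p, q]], ∀ y ∈ [[c, d]], 1 + x * y ≠ 0) :
    ∫ x in p..q, ∫ y in c..d, ((1 + x * y) ^ 2)⁻¹ =
      log (1 + q * d) - log (1 + p * d) - (log (1 + q * c) - log (1 + p * c)) := by
  have hinner : EqOn (fun x => ∫ y in c..d, ((1 + x * y) ^ 2)⁻¹)
      (fun x => d / (1 + x * d) - c / (1 + x * c)) [[p, q]] := fun x hx =>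
    integral_inv_one_add_mul_sq (h x hx)
  have hd : ∀ x ∈ [[p, q]], 1 + x * d ≠ 0 := fun x hx => h x hx d right_mem_uIcc
  have hc : ∀ x ∈ [[p, q]], 1 + x * c ≠ 0 := fun x hx => h x hx c left_mem_uIcc
  rw [integral_congr hinner, integral_sub (intervalIntegrable_div_one_add_mul hd)
    (intervalIntegrable_div_one_add_mul hc), integral_div_one_add_mul hd,
    integral_div_one_add_mul hc]

/-- `1 + x y ≤ 0` forces `x, y` to have opposite signs, and then `x y` is smallest at the
corner `(p, d)` or `(q, c)`. -/
lemma one_add_mul_pos_of_mem_Icc {p q c d x y : ℝ} (hx : x ∈ Icc p q) (hy : y ∈ Icc c d)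
    (hpd : 0 < 1 + p * d) (hqc : 0 < 1 + q * c) : 0 < 1 + x * y := by
  obtain ⟨hpx, hxq⟩ := hx
  obtain ⟨hcy, hyd⟩ := hy
  rcases le_total 0 x with hx | hx <;> rcases le_total 0 y with hy | hy <;> nlinarith

lemma integral_integral_inv_one_add_mul_sq_of_nonneg {p q d : ℝ} (hpq : p ≤ q) (hd : 0 ≤ d)
    (hp : 0 < 1 + p * d) :
    ∫ x in p..q, ∫ y in (0 : ℝ)..d, ((1 + x * y) ^ 2)⁻¹ = log (1 + q * d) - log (1 + p * d) := by
  rw [integral_integral_inv_one_add_mul_sq]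
  · simp
  rw [uIcc_of_le hpq, uIcc_of_le hd]
  exact fun x hx y hy => (one_add_mul_pos_of_mem_Icc hx hy hp (by simp)).ne'

lemma integral_integral_inv_one_add_mul_sq_of_nonpos {p q c : ℝ} (hpq : p ≤ q) (hc : c ≤ 0)
    (hq : 0 < 1 + q * c) :
    ∫ x in p..q, ∫ y in c..(0 : ℝ), ((1 + x * y) ^ 2)⁻¹ = log (1 + p * c) - log (1 + q * c) := by
  rw [integral_integral_inv_one_add_mul_sq]
  · simp
  rw [uIcc_of_le hpq, uIcc_of_le hc]
  exact fun x hx y hy => (one_add_mul_pos_of_mem_Icc hx hy (by simp) hq).ne'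

theorem natural_extension_measure (a b : ℝ)
    (ha : a < 0) (hb : 0 < b)
    (h1 : 1 ≤ -1 / a) (h2 : -1 / a ≤ b + 1)
    (h3 : a - 1 ≤ -1 / b) (h4 : -1 / b ≤ -1) :
    (∫ x in a..(1 - 1 / b), ∫ y in (-1 : ℝ)..0, ((1 + x * y) ^ 2)⁻¹) +
    (∫ x in (1 - 1 / b)..(a + 1), ∫ y in (-(1 : ℝ) / 2)..0, ((1 + x * y) ^ 2)⁻¹) +
    (∫ x in (b - 1)..(-1 / a - 1), ∫ y in (0 : ℝ)..(1 / 2), ((1 + x * y) ^ 2)⁻¹) +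
    (∫ x in (-1 / a - 1)..b, ∫ y in (0 : ℝ)..1, ((1 + x * y) ^ 2)⁻¹) =
      Real.log ((1 + b) * (1 - a)) := by
  have ha1 : -1 ≤ a := by rwa [le_div_iff_of_neg ha, one_mul] at h1
  have hb1 : b ≤ 1 := by rwa [div_le_iff₀ hb, neg_one_mul, neg_le_neg_iff] at h4
  have hib : 0 < 1 / b := by positivity
  have hnb : -1 / b = -(1 / b) := neg_div b 1
  have c1 : 0 < 1 + a * -1 := by linarith
  have c2 : 0 < 1 + (1 - 1 / b) * -1 := by linarith
  have c3 : 0 < 1 + (1 - 1 / b) * (-1 / 2) := by linarith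
  have c4 : 0 < 1 + (a + 1) * (-1 / 2) := by linarith
  have c5 : 0 < 1 + (b - 1) * (1 / 2) := by linarith
  have c6 : 0 < 1 + (-1 / a - 1) * (1 / 2) := by linarith
  have c7 : 0 < 1 + (-1 / a - 1) * 1 := by linarith
  have c8 : 0 < 1 + b * 1 := by linarith
  rw [integral_integral_inv_one_add_mul_sq_of_nonpos (by linarith) (by norm_num) c2,
    integral_integral_inv_one_add_mul_sq_of_nonpos (by linarith) (by norm_num) c4,
    integral_integral_inv_one_add_mul_sq_of_nonneg (by linarith) (by norm_num) c5,
    integral_integral_inv_one_add_mul_sq_of_nonneg (by linarith) (by norm_num) c7,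
    ← exp_eq_exp, exp_log (mul_pos (by linarith) (by linarith))]
  simp only [exp_add, exp_sub, exp_log, c1, c2, c3, c4, c5, c6, c7, c8]
  rw [div_mul_div_comm, div_mul_div_comm, div_mul_div_comm,
    div_eq_iff (by positivity)]
  field_simp [ha.ne]
  ring
end

section
/- Let a, b satisfy 1 ≤ −1/a ≤ b+1 and a−1 ≤ −1/b ≤ −1. Define I(a,b) = ∫_a^{1−1/b} log|x|/(1−x) dx + ∫_{1−1/b}^{a+1} log|x|/(2−x) dx + ∫_{b−1}^{−1/a−1} log|x|/(x+2) dx + ∫_{−1/a−1}^{b} log|x|/(x+1) dx. Then I(a,b) = −π²/6, independently of a and b. -/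
/-!
Splitting each of the four integrals at `0` writes `I(a,b) = A(a) + B(b)`. By the fundamental
theorem of calculus the boundary terms of `A'` cancel because
`log |-1/a - 1| = log |a+1| - log |a|`, and those of `B'` because
`log |1 - 1/b| = log |b-1| - log |b|`; so `A` and `B` are constant and
equal to their values at `a = -1` and `b = 1`, which are both `∫₀¹ log x / (x+1) dx`. Expanding
`1/(x+1)` geometrically and using `∫₀¹ xⁿ log x dx = -1/(n+1)²` gives
`-∑ (-1)ⁿ/(n+1)² = -ζ(2)/2 = -π²/12`.
-/

open Real Set MeasureTheory intervalIntegral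

theorem hasSum_one_div_succ_sq : HasSum (fun n : ℕ => 1 / ((n : ℝ) + 1) ^ 2) (π ^ 2 / 6) := by
  simpa using (hasSum_nat_add_iff' 1).mpr hasSum_zeta_two

theorem hasSum_neg_one_pow_div_succ_sq :
    HasSum (fun n : ℕ => (-1) ^ n / ((n : ℝ) + 1) ^ 2) (π ^ 2 / 12) := by
  set z : ℕ → ℝ := fun n => 1 / ((n : ℝ) + 1) ^ 2
  have hz : HasSum z (π ^ 2 / 6) := hasSum_one_div_succ_sq
  have hodd : HasSum (fun k => z (2 * k + 1)) (π ^ 2 / 24) := by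
    have : (fun k => z (2 * k + 1)) = fun k => z k / 4 := by
      ext k; simp only [z]; push_cast; field_simp; ring
    rw [this, show π ^ 2 / 24 = π ^ 2 / 6 / 4 by ring]
    exact hz.div_const 4
  obtain ⟨e, heven⟩ := hz.summable.comp_injective (mul_right_injective₀ (two_ne_zero' ℕ))
  have he : e = π ^ 2 / 8 := by
    have := (heven.even_add_odd hodd).unique hz
    linarith
  have := HasSum.even_add_odd (f := fun n : ℕ => (-1) ^ n / ((n : ℝ) + 1) ^ 2)
    (by simpa [z, pow_mul, Function.comp_def] using heven)
    (by simpa [z, pow_add, pow_mul, neg_div] using hodd.neg)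
  convert this using 1
  rw [he]; ring

theorem integral_pow_mul_log (n : ℕ) :
    ∫ x in (0 : ℝ)..1, x ^ n * log x = -1 / ((n : ℝ) + 1) ^ 2 := by
  have hn : (n : ℝ) + 1 ≠ 0 := by positivity
  have hcont : Continuous fun x : ℝ => x ^ (n + 1) * log x := by
    refine ((continuous_pow n).mul continuous_mul_log).congr fun x => ?_
    simp only [Pi.mul_apply]
    ring
  have hF : ∀ x ∈ Ioo (0 : ℝ) 1, HasDerivAt
      (fun x => x ^ (n + 1) * log x / (n + 1) - x ^ (n + 1) / ((n : ℝ) + 1) ^ 2)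
      (x ^ n * log x) x := by
    intro x hx
    have hx0 : x ≠ 0 := hx.1.ne'
    have hpow : HasDerivAt (fun x => x ^ (n + 1)) (((n : ℝ) + 1) * x ^ n) x := by
      simpa using hasDerivAt_pow (n + 1) x
    refine (((hpow.mul (hasDerivAt_log hx0)).div_const _).sub
      (hpow.div_const _)).congr_deriv ?_
    field_simp
    ring
  rw [integral_eq_sub_of_hasDerivAt_of_le zero_le_one (by fun_prop) hF
    (intervalIntegrable_log'.continuousOn_mul (continuous_pow n).continuousOn)]
  simp
  ring

theorem integral_log_div_add_one : ∫ x in (0 : ℝ)..1, log x / (x + 1) = -(π ^ 2 / 12) := by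
  set F : ℕ → ℝ → ℝ := fun n x => (-1) ^ n * (x ^ n * log x)
  have hint : ∀ n, IntegrableOn (F n) (Ioc 0 1) := fun n =>
    (intervalIntegrable_iff_integrableOn_Ioc_of_le zero_le_one).mp
      ((intervalIntegrable_log'.continuousOn_mul (continuous_pow n).continuousOn).const_mul _)
  have hnorm : ∀ n, ∫ x in Ioc 0 1, ‖F n x‖ = 1 / ((n : ℝ) + 1) ^ 2 := by
    intro n
    have : EqOn (fun x => ‖F n x‖) (fun x => -(x ^ n * log x)) (Ioc 0 1) := by
      intro x hx
      have hlog : log x ≤ 0 := log_nonpos hx.1.le hx.2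
      simp only [F, norm_mul, norm_pow, norm_neg, norm_one, one_pow, one_mul, Real.norm_eq_abs,
        abs_of_pos hx.1, abs_of_nonpos hlog]
      ring
    rw [setIntegral_congr_fun measurableSet_Ioc this, MeasureTheory.integral_neg,
      ← integral_of_le zero_le_one, integral_pow_mul_log]
    ring
  have hsum : ∀ x ∈ Ioc (0 : ℝ) 1, ∑' n, F n x = log x / (x + 1) := by
    intro x hx
    rcases hx.2.lt_or_eq with hx1 | rfl
    · simp only [F, ← mul_assoc, ← mul_pow, tsum_mul_right]
      rw [tsum_geometric_of_abs_lt_one (by rw [abs_lt]; constructor <;> linarith [hx.1])]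
      field_simp
      ring
    · simp [F]
  have key := hasSum_integral_of_summable_integral_norm hint
    (by simpa only [hnorm] using hasSum_one_div_succ_sq.summable)
  rw [setIntegral_congr_fun measurableSet_Ioc hsum, ← integral_of_le zero_le_one] at key
  refine key.unique ?_
  convert hasSum_neg_one_pow_div_succ_sq.neg using 1
  ext n
  rw [← integral_of_le zero_le_one, intervalIntegral.integral_const_mul, integral_pow_mul_log]
  ring

theorem eq_of_hasDerivAt_eq_zero {f : ℝ → ℝ} {p q : ℝ} (hpq : p ≤ q)
    (hf : ContinuousOn f (Icc p q)) (hf' : ∀ x ∈ Ioo p q, HasDerivAt f 0 x) : f q = f p := by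
  rcases hpq.eq_or_lt with rfl | hlt
  · rfl
  obtain ⟨_, -, h⟩ := exists_hasDerivAt_eq_slope f (fun _ => 0) hlt hf hf'
  rw [eq_comm, div_eq_zero_iff, sub_eq_zero] at h
  exact h.resolve_right (sub_ne_zero.2 hlt.ne')

theorem sub_ne_zero_of_mem_uIcc {c u v : ℝ} (hu : u < c) (hv : v < c) :
    ∀ x ∈ uIcc u v, c - x ≠ 0 :=
  fun _ hx => sub_ne_zero.2 (hx.2.trans_lt (max_lt hu hv)).ne'

theorem add_ne_zero_of_mem_uIcc {c u v : ℝ} (hu : -c < u) (hv : -c < v) :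
    ∀ x ∈ uIcc u v, x + c ≠ 0 :=
  fun _ hx => by linarith [(lt_min hu hv).trans_le hx.1]

section LogQuotient

variable {d : ℝ → ℝ}

theorem intervalIntegrable_log_div (hd : Continuous d) {u v : ℝ}
    (hdu : ∀ x ∈ uIcc u v, d x ≠ 0) : IntervalIntegrable (fun x => log x / d x) volume u v := by
  simpa only [div_eq_mul_inv, Pi.inv_apply] using
    intervalIntegrable_log'.mul_continuousOn (hd.continuousOn.inv₀ hdu)

theorem integral_log_div_eq_sub (hd : Continuous d) {u v : ℝ} (hdu : ∀ x ∈ uIcc 0 u, d x ≠ 0)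
    (hdv : ∀ x ∈ uIcc 0 v, d x ≠ 0) :
    ∫ x in u..v, log x / d x = (∫ x in 0..v, log x / d x) - ∫ x in 0..u, log x / d x :=
  (integral_interval_sub_left (intervalIntegrable_log_div hd hdv)
    (intervalIntegrable_log_div hd hdu)).symm

theorem continuousOn_integral_log_div_comp (hd : Continuous d) {c w : ℝ}
    (hdw : ∀ x ∈ uIcc c w, d x ≠ 0) {g : ℝ → ℝ} {s : Set ℝ} (hg : ContinuousOn g s)
    (hgs : MapsTo g s (uIcc c w)) : ContinuousOn (fun t => ∫ x in c..g t, log x / d x) s :=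
  (continuousOn_primitive_interval' (intervalIntegrable_log_div hd hdw) left_mem_uIcc).comp hg hgs

theorem hasDerivAt_integral_log_div_comp (hd : Continuous d) {g : ℝ → ℝ} {c g' t : ℝ}
    (hg : HasDerivAt g g' t) (hdg : ∀ x ∈ uIcc c (g t), d x ≠ 0) (hgt : g t ≠ 0) :
    HasDerivAt (fun s => ∫ x in c..g s, log x / d x) (log (g t) / d (g t) * g') t := by
  have hmeas : Measurable fun x => log x / d x := measurable_log.div hd.measurable
  refine HasDerivAt.comp t (integral_hasDerivAt_right (intervalIntegrable_log_div hd hdg)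
    hmeas.stronglyMeasurable.stronglyMeasurableAtFilter ?_) hg
  exact (continuousAt_log hgt).div hd.continuousAt (hdg _ right_mem_uIcc)

end LogQuotient

/-- The `a`-dependent part `A(a)` of `I(a,b)`; for `x < 0` the integrands use
`Real.log x = Real.log |x|`. -/
noncomputable def entropyIntegralA (a : ℝ) : ℝ :=
  -(∫ x in 0..a, log x / (1 - x)) + (∫ x in 0..a + 1, log x / (2 - x)) +
    (∫ x in 0..-1 / a - 1, log x / (x + 2)) - ∫ x in 0..-1 / a - 1, log x / (x + 1)

noncomputable def entropyIntegralB (b : ℝ) : ℝ :=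
  (∫ x in 0..1 - 1 / b, log x / (1 - x)) - (∫ x in 0..1 - 1 / b, log x / (2 - x)) -
    (∫ x in 0..b - 1, log x / (x + 2)) + ∫ x in 0..b, log x / (x + 1)

theorem integral_sum_eq_entropyIntegralA_add_entropyIntegralB {a b : ℝ} (ha : a < 0)
    (hb : 0 < b) :
    (∫ x in a..(1 - 1 / b), log x / (1 - x)) + (∫ x in (1 - 1 / b)..(a + 1), log x / (2 - x)) +
      (∫ x in (b - 1)..(-1 / a - 1), log x / (x + 2)) +
      (∫ x in (-1 / a - 1)..b, log x / (x + 1)) = entropyIntegralA a + entropyIntegralB b := by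
  have hA : 0 < -1 / a := div_pos_of_neg_of_neg neg_one_lt_zero ha
  have hB : 0 < 1 / b := one_div_pos.2 hb
  rw [integral_log_div_eq_sub (d := fun x => 1 - x) (by fun_prop)
      (sub_ne_zero_of_mem_uIcc (by norm_num) (by linarith))
      (sub_ne_zero_of_mem_uIcc (by norm_num) (by linarith)),
    integral_log_div_eq_sub (d := fun x => 2 - x) (by fun_prop)
      (sub_ne_zero_of_mem_uIcc (by norm_num) (by linarith))
      (sub_ne_zero_of_mem_uIcc (by norm_num) (by linarith)),
    integral_log_div_eq_sub (d := fun x => x + 2) (by fun_prop)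
      (add_ne_zero_of_mem_uIcc (by norm_num) (by linarith))
      (add_ne_zero_of_mem_uIcc (by norm_num) (by linarith)),
    integral_log_div_eq_sub (d := fun x => x + 1) (by fun_prop)
      (add_ne_zero_of_mem_uIcc (by norm_num) (by linarith))
      (add_ne_zero_of_mem_uIcc (by norm_num) (by linarith))]
  unfold entropyIntegralA entropyIntegralB
  ring

theorem hasDerivAt_neg_one_div_sub_one {t : ℝ} (ht : t ≠ 0) :
    HasDerivAt (fun s => -1 / s - 1) (1 / t ^ 2) t := by
  simpa [neg_div, div_eq_mul_inv] using ((hasDerivAt_inv ht).neg).sub_const 1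

theorem mapsTo_neg_one_div_sub_one {a : ℝ} (ha : a < 0) :
    MapsTo (fun s => -1 / s - 1) (Icc (-1) a) (uIcc 0 (-1 / a - 1)) := by
  intro s ⟨hs₁, hs₂⟩
  have hs : s < 0 := hs₂.trans_lt ha
  have hA : 0 ≤ -1 / a - 1 := by rw [sub_nonneg, le_div_iff_of_neg ha]; linarith
  rw [uIcc_of_le hA]
  constructor
  · rw [sub_nonneg, le_div_iff_of_neg hs]; linarith
  · have := one_div_le_one_div_of_neg_of_le ha hs₂
    simp only [neg_div] at this ⊢
    linarith

theorem continuousOn_entropyIntegralA {a : ℝ} (ha : a < 0) :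
    ContinuousOn entropyIntegralA (Icc (-1) a) := by
  have hA : -1 < -1 / a - 1 := by linarith [div_pos_of_neg_of_neg neg_one_lt_zero ha]
  have hg : ContinuousOn (fun s : ℝ => -1 / s - 1) (Icc (-1) a) :=
    (continuousOn_const.div continuousOn_id fun s hs => (hs.2.trans_lt ha).ne).sub
      continuousOn_const
  have hid : MapsTo (fun s => s) (Icc (-1) a) (uIcc 0 (-1)) := fun s hs => by
    rw [uIcc_of_ge (by norm_num)]
    exact ⟨hs.1, hs.2.trans ha.le⟩
  have hadd : MapsTo (fun s => s + 1) (Icc (-1) a) (uIcc 0 (a + 1)) := fun s hs => by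
    rw [uIcc_of_le (by linarith [hs.1, hs.2])]
    exact ⟨by linarith [hs.1], by linarith [hs.2]⟩
  exact (((continuousOn_integral_log_div_comp (d := fun x => 1 - x) (by fun_prop)
    (sub_ne_zero_of_mem_uIcc (by norm_num) (by norm_num)) continuousOn_id hid).neg.add
    (continuousOn_integral_log_div_comp (d := fun x => 2 - x) (by fun_prop)
      (sub_ne_zero_of_mem_uIcc (by norm_num) (by linarith))
      (continuousOn_id.add continuousOn_const) hadd)).add
    (continuousOn_integral_log_div_comp (d := fun x => x + 2) (by fun_prop)
      (add_ne_zero_of_mem_uIcc (by norm_num) (by linarith)) hg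
      (mapsTo_neg_one_div_sub_one ha))).sub
    (continuousOn_integral_log_div_comp (d := fun x => x + 1) (by fun_prop)
      (add_ne_zero_of_mem_uIcc (by norm_num) hA) hg
      (mapsTo_neg_one_div_sub_one ha))

theorem log_neg_one_div_sub_one {t : ℝ} (ht₁ : -1 < t) (ht₀ : t < 0) :
    log (-1 / t - 1) = log (t + 1) - log t := by
  have ht : t ≠ 0 := ht₀.ne
  rw [show -1 / t - 1 = (t + 1) / -t by field_simp; ring, log_div (by linarith) (by linarith),
    log_neg_eq_log]

theorem hasDerivAt_entropyIntegralA {t : ℝ} (ht₁ : -1 < t) (ht₀ : t < 0) :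
    HasDerivAt entropyIntegralA 0 t := by
  have ht : t ≠ 0 := ht₀.ne
  have hA : 0 < -1 / t - 1 := by rw [sub_pos, lt_div_iff_of_neg ht₀]; linarith
  have h₁ := hasDerivAt_integral_log_div_comp (d := fun x => 1 - x) (c := 0) (by fun_prop)
    (hasDerivAt_id' t) (sub_ne_zero_of_mem_uIcc (by norm_num) (by linarith)) ht
  have h₂ := hasDerivAt_integral_log_div_comp (d := fun x => 2 - x) (c := 0) (by fun_prop)
    ((hasDerivAt_id' t).add_const 1) (sub_ne_zero_of_mem_uIcc (by norm_num) (by linarith))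
    (by linarith)
  have h₃ := hasDerivAt_integral_log_div_comp (d := fun x => x + 2) (c := 0) (by fun_prop)
    (hasDerivAt_neg_one_div_sub_one ht) (add_ne_zero_of_mem_uIcc (by norm_num) (by linarith))
    hA.ne'
  have h₄ := hasDerivAt_integral_log_div_comp (d := fun x => x + 1) (c := 0) (by fun_prop)
    (hasDerivAt_neg_one_div_sub_one ht) (add_ne_zero_of_mem_uIcc (by norm_num) (by linarith))
    hA.ne'
  refine (((h₁.neg.add h₂).add h₃).sub h₄).congr_deriv ?_
  have hone_sub : (1 : ℝ) - t ≠ 0 := by linarith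
  have hsub_one : t - 1 ≠ 0 := by linarith
  rw [log_neg_one_div_sub_one ht₁ ht₀, show 2 - (t + 1) = 1 - t by ring,
    show -1 / t - 1 + 2 = (t - 1) / t by field_simp; ring, show -1 / t - 1 + 1 = -1 / t by ring]
  field_simp
  ring

theorem entropyIntegralA_neg_one :
    entropyIntegralA (-1) = ∫ x in (0 : ℝ)..1, log x / (x + 1) := by
  have h := integral_comp_neg (a := 0) (b := 1) fun x => log x / (1 - x)
  simp only [log_neg_eq_log, sub_neg_eq_add, neg_zero, add_comm (1 : ℝ)] at h
  rw [h, integral_symm]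
  norm_num [entropyIntegralA]

theorem entropyIntegralA_eq {a : ℝ} (ha₁ : -1 ≤ a) (ha₀ : a < 0) :
    entropyIntegralA a = -(π ^ 2 / 12) := by
  rw [eq_of_hasDerivAt_eq_zero ha₁ (continuousOn_entropyIntegralA ha₀)
    fun t ht => hasDerivAt_entropyIntegralA ht.1 (ht.2.trans ha₀), entropyIntegralA_neg_one,
    integral_log_div_add_one]

theorem hasDerivAt_one_sub_one_div {t : ℝ} (ht : t ≠ 0) :
    HasDerivAt (fun s => 1 - 1 / s) (1 / t ^ 2) t := by
  simpa [div_eq_mul_inv] using (hasDerivAt_inv ht).const_sub 1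

theorem mapsTo_one_sub_one_div {b : ℝ} (hb : 0 < b) :
    MapsTo (fun s => 1 - 1 / s) (Icc b 1) (uIcc 0 (1 - 1 / b)) := by
  intro s ⟨hs₁, hs₂⟩
  have hs : 0 < s := hb.trans_le hs₁
  have hB : 1 - 1 / b ≤ 0 := by rw [sub_nonpos, le_div_iff₀ hb]; linarith
  rw [uIcc_of_ge hB]
  constructor
  · linarith [one_div_le_one_div_of_le hb hs₁]
  · rw [sub_nonpos, le_div_iff₀ hs]; linarith

theorem continuousOn_entropyIntegralB {b : ℝ} (hb : 0 < b) :
    ContinuousOn entropyIntegralB (Icc b 1) := by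
  have hB : 1 - 1 / b < 1 := by linarith [one_div_pos.2 hb]
  have hg : ContinuousOn (fun s : ℝ => 1 - 1 / s) (Icc b 1) :=
    continuousOn_const.sub
      (continuousOn_const.div continuousOn_id fun s hs => (hb.trans_le hs.1).ne')
  have hsub : MapsTo (fun s => s - 1) (Icc b 1) (uIcc 0 (b - 1)) := fun s hs => by
    rw [uIcc_of_ge (by linarith [hs.1, hs.2])]
    exact ⟨by linarith [hs.1], by linarith [hs.2]⟩
  have hid : MapsTo (fun s => s) (Icc b 1) (uIcc 0 1) := fun s hs => by
    rw [uIcc_of_le zero_le_one]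
    exact ⟨hb.le.trans hs.1, hs.2⟩
  exact (((continuousOn_integral_log_div_comp (d := fun x => 1 - x) (by fun_prop)
    (sub_ne_zero_of_mem_uIcc (by norm_num) hB) hg (mapsTo_one_sub_one_div hb)).sub
    (continuousOn_integral_log_div_comp (d := fun x => 2 - x) (by fun_prop)
      (sub_ne_zero_of_mem_uIcc (by norm_num) (by linarith)) hg
      (mapsTo_one_sub_one_div hb))).sub
    (continuousOn_integral_log_div_comp (d := fun x => x + 2) (by fun_prop)
      (add_ne_zero_of_mem_uIcc (by norm_num) (by linarith))
      (continuousOn_id.sub continuousOn_const) hsub)).add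
    (continuousOn_integral_log_div_comp (d := fun x => x + 1) (by fun_prop)
      (add_ne_zero_of_mem_uIcc (by norm_num) (by norm_num)) continuousOn_id hid)

theorem log_one_sub_one_div {t : ℝ} (ht₀ : t ≠ 0) (ht₁ : t - 1 ≠ 0) :
    log (1 - 1 / t) = log (t - 1) - log t := by
  rw [show 1 - 1 / t = (t - 1) / t by field_simp, log_div ht₁ ht₀]

theorem hasDerivAt_entropyIntegralB {t : ℝ} (ht₀ : 0 < t) (ht₁ : t < 1) :
    HasDerivAt entropyIntegralB 0 t := by
  have ht : t ≠ 0 := ht₀.ne'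
  have hB : 1 - 1 / t < 0 := by rw [sub_neg, lt_div_iff₀ ht₀]; linarith
  have h₁ := hasDerivAt_integral_log_div_comp (d := fun x => 1 - x) (c := 0) (by fun_prop)
    (hasDerivAt_one_sub_one_div ht) (sub_ne_zero_of_mem_uIcc (by norm_num) (by linarith)) hB.ne
  have h₂ := hasDerivAt_integral_log_div_comp (d := fun x => 2 - x) (c := 0) (by fun_prop)
    (hasDerivAt_one_sub_one_div ht) (sub_ne_zero_of_mem_uIcc (by norm_num) (by linarith)) hB.ne
  have h₃ := hasDerivAt_integral_log_div_comp (d := fun x => x + 2) (c := 0) (by fun_prop)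
    ((hasDerivAt_id' t).sub_const 1) (add_ne_zero_of_mem_uIcc (by norm_num) (by linarith))
    (by linarith)
  have h₄ := hasDerivAt_integral_log_div_comp (d := fun x => x + 1) (c := 0) (by fun_prop)
    (hasDerivAt_id' t) (add_ne_zero_of_mem_uIcc (by norm_num) (by linarith)) ht
  refine (((h₁.sub h₂).sub h₃).add h₄).congr_deriv ?_
  have hadd_one : t + 1 ≠ 0 := by linarith
  rw [log_one_sub_one_div ht (by linarith), show 1 - (1 - 1 / t) = 1 / t by ring,
    show 2 - (1 - 1 / t) = (t + 1) / t by field_simp; ring, show t - 1 + 2 = t + 1 by ring]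
  field_simp
  ring

theorem entropyIntegralB_one :
    entropyIntegralB 1 = ∫ x in (0 : ℝ)..1, log x / (x + 1) := by
  norm_num [entropyIntegralB]

theorem entropyIntegralB_eq {b : ℝ} (hb₀ : 0 < b) (hb₁ : b ≤ 1) :
    entropyIntegralB b = -(π ^ 2 / 12) := by
  rw [← eq_of_hasDerivAt_eq_zero hb₁ (continuousOn_entropyIntegralB hb₀)
    fun t ht => hasDerivAt_entropyIntegralB (hb₀.trans ht.1) ht.2, entropyIntegralB_one,
    integral_log_div_add_one]

theorem entropy_integral_constant_general (a b : ℝ)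
    (h1 : 1 ≤ -1 / a) (h4 : -1 / b ≤ -1) :
    (∫ x in a..(1 - 1 / b), Real.log |x| / (1 - x)) +
    (∫ x in (1 - 1 / b)..(a + 1), Real.log |x| / (2 - x)) +
    (∫ x in (b - 1)..(-1 / a - 1), Real.log |x| / (x + 2)) +
    (∫ x in (-1 / a - 1)..b, Real.log |x| / (x + 1)) =
      -(Real.pi ^ 2) / 6 := by
  have ha₀ : a < 0 := by
    by_contra! ha
    linarith [div_nonpos_of_nonpos_of_nonneg (by norm_num : (-1 : ℝ) ≤ 0) ha]
  have hb₀ : 0 < b := by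
    by_contra! hb
    linarith [div_nonneg_of_nonpos (by norm_num : (-1 : ℝ) ≤ 0) hb]
  have ha₁ : -1 ≤ a := by simpa using (le_div_iff_of_neg ha₀).mp h1
  have hb₁ : b ≤ 1 := by simpa using (div_le_iff₀ hb₀).mp h4
  simp only [log_abs]
  rw [integral_sum_eq_entropyIntegralA_add_entropyIntegralB ha₀ hb₀,
    entropyIntegralA_eq ha₁ ha₀, entropyIntegralB_eq hb₀ hb₁]
  ring

theorem entropy_integral_constant (a b : ℝ)
    (h1 : 1 ≤ -1 / a) (h2 : -1 / a ≤ b + 1)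
    (h3 : a - 1 ≤ -1 / b) (h4 : -1 / b ≤ -1) :
    (∫ x in a..(1 - 1 / b), Real.log |x| / (1 - x)) +
    (∫ x in (1 - 1 / b)..(a + 1), Real.log |x| / (2 - x)) +
    (∫ x in (b - 1)..(-1 / a - 1), Real.log |x| / (x + 2)) +
    (∫ x in (-1 / a - 1)..b, Real.log |x| / (x + 1)) =
      -(Real.pi ^ 2) / 6 :=
  entropy_integral_constant_general a b h1 h4
end
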